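/- arXiv:1905.02010 — 4 statements merged into one kernel-verified Lean document; each statement's English description precedes it below -/
import Mathlib

section
/- If a table r satisfies the order dependency X ↦→ Y (for lists of attributes X and Y), then r satisfies the functional dependency set(X) → set(Y), where set(L) denotes the set of entries of the list L. -/
/-- `ordLE X t s` : the lexicographic weak order `t ≼_X s` induced by a list
of attributes `X` (each attribute is a function `τ → ℤ`). -/
def ordLE {τ : Type*} : List (τ → ℤ) → τ → τ → Prop
  | [], _, _ => True
  | A :: T, t, s => A t < A s ∨ (A t = A s ∧ ordLE T t s)

/-- The table `r` satisfies the order dependency (OD) `X ↦→ Y`. -/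
def satOD {τ : Type*} (r : List τ) (X Y : List (τ → ℤ)) : Prop :=
  ∀ t ∈ r, ∀ s ∈ r, ordLE X t s → ordLE Y t s

/-- `X` and `Y` are order equivalent over `r` (`X ↔ Y`). -/
def orderEquiv {τ : Type*} (r : List τ) (X Y : List (τ → ℤ)) : Prop :=
  satOD r X Y ∧ satOD r Y X

/-- `X` and `Y` are order compatible over `r` (the OCD `X ~ Y`). -/
def satOCD {τ : Type*} (r : List τ) (X Y : List (τ → ℤ)) : Prop :=
  orderEquiv r (X ++ Y) (Y ++ X)

/-- The table `r` satisfies the functional dependency (FD) `X → Y`. -/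
def satFD {τ : Type*} (r : List τ) (X Y : Finset (τ → ℤ)) : Prop :=
  ∀ t ∈ r, ∀ s ∈ r, (∀ A ∈ X, A t = A s) → ∀ B ∈ Y, B t = B s

/-- Attribute `A` is a constant in the context `Z` over `r`
(the set-based canonical OD `Z : [] ↦→ A`). -/
def constIn {τ : Type*} [DecidableEq (τ → ℤ)] (r : List τ) (Z : Finset (τ → ℤ))
    (A : τ → ℤ) : Prop :=
  ∀ Zp : List (τ → ℤ), Zp.Nodup → Zp.toFinset = Z → satOD r Zp (Zp ++ [A])

/-- Attributes `A` and `B` are order compatible in the context `Z` over `r`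
(the set-based canonical OCD `Z : A ~ B`). -/
def ocIn {τ : Type*} [DecidableEq (τ → ℤ)] (r : List τ) (Z : Finset (τ → ℤ))
    (A B : τ → ℤ) : Prop :=
  ∀ Zp : List (τ → ℤ), Zp.Nodup → Zp.toFinset = Z → satOCD r (Zp ++ [A]) (Zp ++ [B])

/-! Tuples agreeing on `X` are `≼_X`-related in both directions, so the OD makes them
`≼_Y`-related in both directions, and a lexicographic preorder relates two tuples both ways
only when they agree on every attribute. -/

section ordLE

variable {τ : Type*}

theorem ordLE_of_forall_eq {X : List (τ → ℤ)} {t s : τ} (h : ∀ A ∈ X, A t = A s) :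
    ordLE X t s := by
  induction X with
  | nil => trivial
  | cons A T ih =>
    exact Or.inr ⟨h A List.mem_cons_self, ih fun B hB => h B (List.mem_cons_of_mem _ hB)⟩

theorem forall_eq_of_ordLE_of_ordLE {Y : List (τ → ℤ)} {t s : τ} (hts : ordLE Y t s)
    (hst : ordLE Y s t) : ∀ B ∈ Y, B t = B s := by
  induction Y with
  | nil => simp
  | cons A T ih =>
    have hA : A t = A s := by
      rcases hts with _ | ⟨_, _⟩ <;> rcases hst with _ | ⟨_, _⟩ <;> omega
    have hT : ∀ B ∈ T, B t = B s :=
      ih (hts.resolve_left (by omega)).2 (hst.resolve_left (by omega)).2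
    simpa [hA] using hT

end ordLE

theorem stmt_0 {τ : Type*} [DecidableEq (τ → ℤ)] (r : List τ) (X Y : List (τ → ℤ))
    (h : satOD r X Y) : satFD r X.toFinset Y.toFinset := by
  intro t ht s hs hX B hB
  have hX' : ∀ A ∈ X, A t = A s := fun A hA => hX A (List.mem_toFinset.2 hA)
  have hts : ordLE Y t s := h t ht s hs (ordLE_of_forall_eq hX')
  have hst : ordLE Y s t := h s hs t ht (ordLE_of_forall_eq fun A hA => (hX' A hA).symm)
  exact forall_eq_of_ordLE_of_ordLE hts hst B (List.mem_toFinset.1 hB)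
end

section
/- A table r satisfies the functional dependency X → Y (for finite sets of attributes X and Y) if and only if for every list X' whose entries are pairwise distinct and whose set of entries equals X, and every list Y' whose set of entries equals Y, r satisfies the order dependency X' ↦→ X' ++ Y'. -/
/-! Comparing by `X ++ Y` refines comparing by `X` only on pairs that agree on `X`, where it
compares by `Y`. So `X ↦→ X ++ Y` says that any two tuples agreeing on `X` are `≼_Y`-related, hence
related both ways, and two tuples related both ways by `≼_Y` agree on `Y`: this is the FD. -/

section
variable {τ : Type*}

theorem ordLE_append {X Y : List (τ → ℤ)} {t s : τ} :
    ordLE (X ++ Y) t s ↔ ordLE X t s ∧ ((∀ A ∈ X, A t = A s) → ordLE Y t s) := by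
  induction X with
  | nil => simp [ordLE]
  | cons A T ih =>
    simp only [List.cons_append, ordLE, ih, List.forall_mem_cons]
    rcases lt_trichotomy (A t) (A s) with h | h | h
    · simp [h, h.ne]
    · simp [h]
    · simp [h.not_gt, h.ne']

theorem satOD_append_iff {r : List τ} {X Y : List (τ → ℤ)} :
    satOD r X (X ++ Y) ↔ ∀ t ∈ r, ∀ s ∈ r, (∀ A ∈ X, A t = A s) → ordLE Y t s := by
  simp only [satOD, ordLE_append]
  exact ⟨fun h t ht s hs hX => (h t ht s hs (ordLE_of_forall_eq hX)).2 hX,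
    fun h t ht s hs hXts => ⟨hXts, h t ht s hs⟩⟩

end

theorem stmt_1 {τ : Type*} [DecidableEq (τ → ℤ)] (r : List τ) (X Y : Finset (τ → ℤ)) :
    satFD r X Y ↔
      ∀ X' : List (τ → ℤ), X'.Nodup → X'.toFinset = X →
        ∀ Y' : List (τ → ℤ), Y'.toFinset = Y → satOD r X' (X' ++ Y') := by
  constructor
  · rintro hFD X' - rfl Y' rfl
    refine satOD_append_iff.2 fun t ht s hs hX => ordLE_of_forall_eq fun B hB => ?_
    exact hFD t ht s hs (fun A hA => hX A (List.mem_toFinset.1 hA)) B (List.mem_toFinset.2 hB)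
  · intro hOD t ht s hs hX B hB
    have hOD' := satOD_append_iff.1
      (hOD X.toList X.nodup_toList X.toList_toFinset Y.toList Y.toList_toFinset)
    have hXts : ∀ A ∈ X.toList, A t = A s := fun A hA => hX A (Finset.mem_toList.1 hA)
    have hXst : ∀ A ∈ X.toList, A s = A t := fun A hA => (hXts A hA).symm
    exact forall_eq_of_ordLE_of_ordLE (hOD' t ht s hs hXts) (hOD' s hs t ht hXst) B
      (Finset.mem_toList.2 hB)
end

section
/- For any table r and any lists of attributes X = [X₁, …, X_n] and Y = [Y₁, …, Y_m]: r satisfies the order compatibility X ~ Y if and only if for all indices 1 ≤ i ≤ n and 1 ≤ j ≤ m, attributes X_i and Y_j are order compatible in the context {X₁, …, X_{i−1}} ∪ {Y₁, …, Y_{j−1}} over r. -/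
/-!
A strict lexicographic comparison `t <_X s` is witnessed by its first index `i` at which `X i`
differs on `t` and `s`. Since `≼` is the complement of the reversed strict order, `X ~ Y` fails
exactly when some pair of tuples is "swapped": `t <_X s` and `s <_Y t`. Taking the witnessing
indices `i` and `j`, such a swap is the same as a pair of tuples agreeing on
`X₁, …, X_{i-1}, Y₁, …, Y_{j-1}` and ordered oppositely by `X_i` and `Y_j`, which is precisely
a violation of the context compatibility `{X₁, …, X_{i-1}} ∪ {Y₁, …, Y_{j-1}} : X_i ~ Y_j`.
-/

section Lexicographic

variable {τ : Type*}

def ordLT : List (τ → ℤ) → τ → τ → Prop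
  | [], _, _ => False
  | A :: T, t, s => A t < A s ∨ (A t = A s ∧ ordLT T t s)

def eqOn (L : List (τ → ℤ)) (t s : τ) : Prop := ∀ A ∈ L, A t = A s

variable {L X Y : List (τ → ℤ)} {t s : τ}

@[simp]
lemma eqOn_nil : eqOn [] t s := by simp [eqOn]

@[simp]
lemma eqOn_cons {A : τ → ℤ} : eqOn (A :: L) t s ↔ A t = A s ∧ eqOn L t s := by
  simp [eqOn]

lemma eqOn_append : eqOn (X ++ Y) t s ↔ eqOn X t s ∧ eqOn Y t s := by
  simp [eqOn, or_imp, forall_and]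

lemma eqOn_comm : eqOn L t s ↔ eqOn L s t := by
  simp only [eqOn, eq_comm]

lemma ordLE_iff_ordLT_or_eqOn : ordLE L t s ↔ ordLT L t s ∨ eqOn L t s := by
  induction L with
  | nil => simp [ordLE, ordLT]
  | cons A T ih =>
    simp only [ordLE, ordLT, eqOn_cons, ih]
    tauto

lemma ordLT_trichotomy (L : List (τ → ℤ)) (t s : τ) :
    ordLT L t s ∨ eqOn L t s ∨ ordLT L s t := by
  induction L with
  | nil => simp
  | cons A T ih =>
    simp only [ordLT, eqOn_cons]
    rcases lt_trichotomy (A t) (A s) with h | h | h <;> grind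

lemma ordLT_asymm (h : ordLT L t s) : ¬ ordLT L s t := by
  induction L with
  | nil => exact h.elim
  | cons A T ih =>
    rcases h with h | ⟨e, h⟩ <;> rintro (h' | ⟨e', h'⟩)
    all_goals first | omega | exact ih h h'

lemma not_ordLT_of_eqOn (h : eqOn L t s) : ¬ ordLT L t s := by
  induction L with
  | nil => exact id
  | cons A T ih =>
    rw [eqOn_cons] at h
    rintro (h' | ⟨-, h'⟩)
    · omega
    · exact ih h.2 h'

lemma ordLE_iff_not_ordLT : ordLE L t s ↔ ¬ ordLT L s t := by
  rw [ordLE_iff_ordLT_or_eqOn]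
  have := @ordLT_asymm _ L t s
  have := @not_ordLT_of_eqOn _ L s t
  have := @eqOn_comm _ L t s
  have := ordLT_trichotomy L t s
  tauto

lemma ordLT_append : ordLT (X ++ Y) t s ↔ ordLT X t s ∨ (eqOn X t s ∧ ordLT Y t s) := by
  induction X with
  | nil => simp [ordLT]
  | cons A T ih =>
    simp only [List.cons_append, ordLT, eqOn_cons, ih]
    tauto

lemma ordLT_append_and_ordLT_append_iff {Z : List (τ → ℤ)} :
    ordLT (Z ++ X) t s ∧ ordLT (Z ++ Y) s t ↔ eqOn Z t s ∧ ordLT X t s ∧ ordLT Y s t := by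
  simp only [ordLT_append]
  have := @ordLT_asymm _ Z t s
  have := @not_ordLT_of_eqOn _ Z t s
  have := @not_ordLT_of_eqOn _ Z s t
  have := @eqOn_comm _ Z t s
  tauto

@[simp]
lemma ordLT_singleton {A : τ → ℤ} : ordLT [A] t s ↔ A t < A s := by
  simp [ordLT]

lemma ordLT_iff_exists_get :
    ordLT X t s ↔ ∃ i : Fin X.length, eqOn (X.take i) t s ∧ X.get i t < X.get i s := by
  induction X with
  | nil => simp [ordLT]
  | cons A T ih =>
    simp only [ordLT, ih, List.length_cons, Fin.exists_fin_succ, Fin.val_succ, Fin.val_zero,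
      List.take_zero, List.take_succ_cons, eqOn_nil, eqOn_cons, List.get_cons_zero,
      true_and, and_assoc, exists_and_left]
    rfl

end Lexicographic

section Dependencies

variable {τ : Type*} {r : List τ}

lemma satOD_iff {X Y : List (τ → ℤ)} :
    satOD r X Y ↔ ∀ t ∈ r, ∀ s ∈ r, ordLT Y t s → ordLT X t s := by
  simp only [satOD, ordLE_iff_not_ordLT, not_imp_not]
  exact ⟨fun h t ht s hs => h s hs t ht, fun h t ht s hs => h s hs t ht⟩

lemma ordLT_append_comm_of_not_swap {X Y : List (τ → ℤ)} {t s : τ}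
    (h : ¬ (ordLT X t s ∧ ordLT Y s t)) (hXY : ordLT (X ++ Y) t s) : ordLT (Y ++ X) t s := by
  rw [ordLT_append] at hXY ⊢
  rcases hXY with hX | ⟨hXe, hY⟩
  · rcases ordLT_trichotomy Y t s with hY | hY | hY
    · exact Or.inl hY
    · exact Or.inr ⟨hY, hX⟩
    · exact (h ⟨hX, hY⟩).elim
  · exact Or.inl hY

lemma satOCD_iff_forall_not_swap {X Y : List (τ → ℤ)} :
    satOCD r X Y ↔ ∀ t ∈ r, ∀ s ∈ r, ¬ (ordLT X t s ∧ ordLT Y s t) := by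
  refine ⟨fun h t ht s hs ⟨hX, hY⟩ => ?_, fun h => ⟨?_, ?_⟩⟩
  · have hXY := (satOD_iff.mp h.1) s hs t ht (ordLT_append.mpr (Or.inl hY))
    rcases ordLT_append.mp hXY with hX' | ⟨hX', -⟩
    · exact ordLT_asymm hX hX'
    · exact not_ordLT_of_eqOn (eqOn_comm.mp hX') hX
  · exact satOD_iff.mpr fun t ht s hs =>
      ordLT_append_comm_of_not_swap fun ⟨hY, hX⟩ => h s hs t ht ⟨hX, hY⟩
  · exact satOD_iff.mpr fun t ht s hs => ordLT_append_comm_of_not_swap (h t ht s hs)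

lemma ocIn_toFinset_iff [DecidableEq (τ → ℤ)] {L : List (τ → ℤ)} {A B : τ → ℤ} :
    ocIn r L.toFinset A B ↔ ∀ t ∈ r, ∀ s ∈ r, ¬ (eqOn L t s ∧ A t < A s ∧ B s < B t) := by
  have eqOn_congr {Zp : List (τ → ℤ)} (hZp : Zp.toFinset = L.toFinset) (t s : τ) :
      eqOn Zp t s ↔ eqOn L t s := by
    simp only [eqOn, ← List.mem_toFinset, hZp]
  simp only [ocIn, satOCD_iff_forall_not_swap, ordLT_append_and_ordLT_append_iff,
    ordLT_singleton]
  refine ⟨fun h => ?_, fun h Zp _ hZp t ht s hs => ?_⟩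
  · simpa only [eqOn_congr (L.toFinset.toList_toFinset)] using
      h L.toFinset.toList L.toFinset.nodup_toList L.toFinset.toList_toFinset
  · simpa only [eqOn_congr hZp] using h t ht s hs

end Dependencies

theorem stmt_4 {τ : Type*} [DecidableEq (τ → ℤ)] (r : List τ) (X Y : List (τ → ℤ)) :
    satOCD r X Y ↔
      ∀ (i : Fin X.length) (j : Fin Y.length),
        ocIn r ((X.take i).toFinset ∪ (Y.take j).toFinset) (X.get i) (Y.get j) := by
  simp only [satOCD_iff_forall_not_swap, ordLT_iff_exists_get, ← List.toFinset_append,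
    ocIn_toFinset_iff, eqOn_append]
  constructor
  · rintro h i j t ht s hs ⟨⟨hXi, hYj⟩, hX, hY⟩
    exact h t ht s hs ⟨⟨i, hXi, hX⟩, j, eqOn_comm.mp hYj, hY⟩
  · rintro h t ht s hs ⟨⟨i, hXi, hX⟩, j, hYj, hY⟩
    exact h i j t ht s hs ⟨⟨hXi, eqOn_comm.mp hYj⟩, hX, hY⟩
end

section
/- The converse of the prefix rule for order compatibility fails: there exist a table r and lists of attributes X, Y, Z such that r satisfies the order compatibility X ++ Y ~ X ++ Z, yet r does not satisfy Y ~ Z, r does not satisfy X ++ Y ~ Z, and r does not satisfy Y ~ X ++ Z. -/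
theorem stmt_7 :
    ∃ (τ : Type) (r : List τ) (X Y Z : List (τ → ℤ)),
      satOCD r (X ++ Y) (X ++ Z) ∧
      ¬ satOCD r Y Z ∧
      ¬ satOCD r (X ++ Y) Z ∧
      ¬ satOCD r Y (X ++ Z) := by
  refine ⟨ℤ, [0, 1, 2], [fun t => t], [fun t => -(t-1)^2], [fun t => -t], ?_, ?_, ?_, ?_⟩
  · constructor <;>
    · intro t ht s hs h
      simp only [List.mem_cons, List.mem_singleton, List.not_mem_nil, or_false] at ht hs
      rcases ht with rfl | rfl | rfl <;> rcases hs with rfl | rfl | rfl <;>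
        simp [ordLE] at h ⊢
  · intro h
    have := h.1 0 (by simp) 1 (by simp)
    simp [ordLE] at this
  · intro h
    have := h.1 0 (by simp) 1 (by simp)
    simp [ordLE] at this
  · intro h
    have := h.2 1 (by simp) 2 (by simp)
    simp [ordLE] at this
end
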